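/- arXiv:1811.02137 — 5 statements merged into one kernel-verified Lean document; each statement's English description precedes it below -/
import Mathlib

section
/- For every positive integers k, a, b with k-1 ≤ b ≤ a-k, we have ∑_{i=1}^{k} (-1)^{i-1} · C(k-1, i-1) · C(a-i, b) = C(a-k, b-k+1). -/
/-! After the substitution `i ↦ k - i`, the sum is the `(k - 1)`-th forward difference of
`x ↦ C(x, b)` at `x = a - k`, and each forward difference lowers the lower index by one by Pascal's
rule: `Δ C(x, r + 1) = C(x, r)`. -/

open Finset

theorem sum_range_neg_one_pow_mul_choose_mul_choose_add (m j x : ℕ) :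
    ∑ i ∈ range (m + 1), (-1 : ℤ) ^ (m - i) * m.choose i * (x + i).choose (m + j) =
      x.choose j := by
  have h := congrFun (fwdDiff_iter_choose j m) x
  rw [fwdDiff_iter_eq_sum_shift] at h
  simpa only [smul_eq_mul, nsmul_eq_mul, mul_one, Nat.cast_id] using h

theorem stmt_0_general (k a b : ℕ) (hk : 0 < k) (hb : 0 < b)
    (h1 : k - 1 ≤ b) (h2 : b ≤ a - k) :
    ∑ i ∈ Finset.Icc 1 k,
        ((-1 : ℤ) ^ (i - 1) * ((k - 1).choose (i - 1)) * ((a - i).choose b))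
      = ((a - k).choose (b + 1 - k)) := by
  have hka : k ≤ a := by omega
  rw [← sum_range_neg_one_pow_mul_choose_mul_choose_add (k - 1) (b + 1 - k) (a - k),
    show k - 1 + (b + 1 - k) = b by omega]
  refine sum_nbij' (fun i ↦ k - i) (fun i ↦ k - i) ?_ ?_ ?_ ?_ ?_ <;> intro i hi <;>
    simp only [mem_Icc, mem_range] at hi ⊢
  iterate 4 omega
  rw [show k - 1 - (k - i) = i - 1 by omega, show a - k + (k - i) = a - i by omega,
    show k - i = k - 1 - (i - 1) by omega, Nat.choose_symm (by omega)]

theorem stmt_0 (k a b : ℕ) (hk : 0 < k) (ha : 0 < a) (hb : 0 < b)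
    (h1 : k - 1 ≤ b) (h2 : b ≤ a - k) :
    ∑ i ∈ Finset.Icc 1 k,
        ((-1 : ℤ) ^ (i - 1) * ((k - 1).choose (i - 1)) * ((a - i).choose b))
      = ((a - k).choose (b + 1 - k)) :=
  stmt_0_general k a b hk hb h1 h2
end

section
/- For positive integers k, a, b such that k-1 ≤ b and b+k ≤ a, we have ∑_{i=1}^{k} (-1)^{i-1} · C(k, i) · C(a-i, b) = ∑_{i=1}^{k} C(a-i, b-i+1). -/
/-!
Both sides equal `C(a, b) - C(a - k, a - b)`. Adding the term `i = 0`, the left side becomes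
`C(a, b)` minus the `k`-th forward difference of `x ↦ C(x, b)` at `a - k`, which is
`C(a - k, b - k)` for `k ≤ b` and `0` for `k = b + 1`. The right side telescopes by Pascal's
rule. Writing the remainder as `C(a - k, a - b)` covers both cases at once, since it vanishes
for `k = b + 1`.
-/

open Finset

theorem fwdDiff_iter_choose_eq_ite (m k x : ℕ) :
    (fwdDiff 1)^[k] (fun x ↦ x.choose m : ℕ → ℤ) x
      = if k ≤ m then (x.choose (m - k) : ℤ) else 0 := by
  split_ifs with hkm
  · obtain ⟨j, rfl⟩ := Nat.exists_eq_add_of_le hkm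
    rw [fwdDiff_iter_choose, Nat.add_sub_cancel_left]
  · obtain ⟨j, rfl⟩ := Nat.exists_eq_add_of_lt (not_le.mp hkm)
    have hconst : (fwdDiff 1)^[m] (fun x ↦ x.choose m : ℕ → ℤ) = fun _ ↦ 1 := by
      simpa using fwdDiff_iter_choose 0 m
    rw [show m + j + 1 = j + 1 + m by ring, Function.iterate_add_apply, hconst,
      Function.iterate_succ_apply, fwdDiff_const, Function.iterate_fixed (fwdDiff_const 1 0)]

theorem sum_range_neg_one_pow_mul_choose_mul_choose_sub {k n : ℕ} (m : ℕ) (hkn : k ≤ n) :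
    ∑ i ∈ range (k + 1), (-1 : ℤ) ^ i * k.choose i * (n - i).choose m
      = if k ≤ m then ((n - k).choose (m - k) : ℤ) else 0 := by
  rw [← fwdDiff_iter_choose_eq_ite, fwdDiff_iter_eq_sum_shift, ← sum_range_reflect]
  refine sum_congr rfl fun i hi ↦ ?_
  have hik : i ≤ k := Nat.lt_succ_iff.mp (mem_range.mp hi)
  rw [Nat.add_sub_cancel, Nat.choose_symm_of_eq_add (Nat.sub_add_cancel hik).symm, smul_eq_mul,
    smul_eq_mul, mul_one, show n - k + i = n - (k - i) by omega]

theorem sum_Icc_one_neg_one_pow_sub_one_mul (f : ℕ → ℤ) (k : ℕ) :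
    ∑ i ∈ Icc 1 k, (-1 : ℤ) ^ (i - 1) * f i = f 0 - ∑ i ∈ range (k + 1), (-1 : ℤ) ^ i * f i := by
  rw [range_eq_Ico, sum_eq_sum_Ico_succ_bot k.succ_pos, ← Ico_add_one_right_eq_Icc, pow_zero,
    one_mul, sub_add_cancel_left, ← sum_neg_distrib]
  refine sum_congr rfl fun i hi ↦ ?_
  obtain ⟨j, rfl⟩ := Nat.exists_eq_add_of_lt (mem_Ico.mp hi).1
  simp [pow_succ]

theorem sum_Icc_choose_sub_add_choose {k a b : ℕ} (hkb : k ≤ b + 1) (hka : b + k ≤ a) :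
    ∑ i ∈ Icc 1 k, (a - i).choose (b + 1 - i) + (a - k).choose (a - b) = a.choose b := by
  induction k with
  | zero => simpa using Nat.choose_symm (by omega : b ≤ a)
  | succ k ih =>
    rw [sum_Icc_succ_top (by omega), add_assoc, ← ih (by omega) (by omega)]
    congr 1
    rw [show a - k = a - (k + 1) + 1 by omega, show a - b = a - b - 1 + 1 by omega,
      Nat.choose_succ_succ']
    congr 1
    exact Nat.choose_symm_of_eq_add (by omega)

theorem stmt_1_general (k a b : ℕ)
    (h1 : k - 1 ≤ b) (h2 : b + k ≤ a) :
    ∑ i ∈ Finset.Icc 1 k, ((-1 : ℤ) ^ (i - 1) * (k.choose i) * ((a - i).choose b))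
      = ∑ i ∈ Finset.Icc 1 k, (((a - i).choose (b + 1 - i) : ℤ)) := by
  have hdiff : (if k ≤ b then ((a - k).choose (b - k) : ℤ) else 0) = (a - k).choose (a - b) := by
    split_ifs with hkb
    · exact_mod_cast Nat.choose_symm_of_eq_add (by omega)
    · rw [Nat.choose_eq_zero_of_lt (by omega), Nat.cast_zero]
  simp_rw [mul_assoc]
  rw [sum_Icc_one_neg_one_pow_sub_one_mul (fun i ↦ k.choose i * (a - i).choose b)]
  simp_rw [← mul_assoc]
  rw [sum_range_neg_one_pow_mul_choose_mul_choose_sub b (by omega), hdiff]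
  simp only [Nat.choose_zero_right, Nat.sub_zero, Nat.cast_one, one_mul]
  rw [← sum_Icc_choose_sub_add_choose (by omega : k ≤ b + 1) h2]
  push_cast
  ring

theorem stmt_1 (k a b : ℕ) (hk : 0 < k) (ha : 0 < a) (hb : 0 < b)
    (h1 : k - 1 ≤ b) (h2 : b + k ≤ a) :
    ∑ i ∈ Finset.Icc 1 k, ((-1 : ℤ) ^ (i - 1) * (k.choose i) * ((a - i).choose b))
      = ∑ i ∈ Finset.Icc 1 k, (((a - i).choose (b + 1 - i) : ℤ)) :=
  stmt_1_general k a b h1 h2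
end

section
/- With norm₃ as above, if A ⊆ P_N can be split by 2^n sets (i.e., there is a partition of {0,...,N-1} into sets V_0,...,V_{2^n - 1} with A↾V_k = ∅ for each k), then norm₃(A) ≤ n, i.e., it is not the case that norm₃(A) ≥ n+1. -/
/-- `norm3ge n A` means `norm₃(A) ≥ n`:
`norm₃(A) ≥ 0` always; `norm₃(A) ≥ 1` iff `A ≠ ∅`; and `norm₃(A) ≥ n+1` (for `n ≥ 1`) iff
for every `z ⊆ N`, `norm₃(A↾z) ≥ n` or `norm₃(A↾(N\z)) ≥ n`, where `A↾z = {a ∈ A : a ⊆ z}`. -/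
def norm3ge {N : ℕ} : ℕ → Finset (Finset (Fin N)) → Prop
  | 0, _ => True
  | 1, A => A ≠ ∅
  | (n + 2), A => ∀ z : Finset (Fin N),
      norm3ge (n + 1) (A.filter fun a => a ⊆ z) ∨
      norm3ge (n + 1) (A.filter fun a => a ⊆ zᶜ)

/-- `A` is split by a partition of `Fin N` into `m` sets: no element of `A` is contained
in any single part. -/
def splitBy {N : ℕ} (A : Finset (Finset (Fin N))) (m : ℕ) : Prop :=
  ∃ V : Fin m → Finset (Fin N),
    (∀ i j, i ≠ j → Disjoint (V i) (V j)) ∧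
    (Finset.univ.biUnion V = Finset.univ) ∧
    ∀ i, A.filter (fun a => a ⊆ V i) = ∅

lemma aux13 {N : ℕ} (n : ℕ) (A : Finset (Finset (Fin N))) (V : Fin (2 ^ n) → Finset (Fin N))
    (hcov : ∀ a ∈ A, a ⊆ Finset.univ.biUnion V)
    (hemp : ∀ i, A.filter (fun a => a ⊆ V i) = ∅) : ¬ norm3ge (n + 1) A := by
  induction n generalizing A with
  | zero =>
    intro h
    apply h
    rw [Finset.eq_empty_iff_forall_notMem]
    intro a ha
    have h1 : a ⊆ V 0 := by
      have := hcov a ha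
      intro x hx
      have := this hx
      simp only [Finset.mem_biUnion, Finset.mem_univ, true_and] at this
      obtain ⟨i, hi⟩ := this
      have : i = 0 := by
        have := i.2
        exact Fin.ext (by simpa using this)
      rwa [this] at hi
    have := hemp 0
    rw [Finset.eq_empty_iff_forall_notMem] at this
    exact this a (Finset.mem_filter.mpr ⟨ha, h1⟩)
  | succ n ih =>
    intro h
    have h2 : (2 : ℕ) ^ n < 2 ^ (n + 1) :=
      Nat.pow_lt_pow_succ (by norm_num)
    have hlo : ∀ i : Fin (2 ^ n), (i : ℕ) < 2 ^ (n + 1) := fun i => lt_trans i.2 h2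
    have hhi : ∀ i : Fin (2 ^ n), 2 ^ n + (i : ℕ) < 2 ^ (n + 1) := by
      intro i
      have : (2:ℕ)^(n+1) = 2 * 2^n := by ring
      have := i.2
      omega
    set lo : Fin (2 ^ n) → Fin (2 ^ (n + 1)) := fun i => ⟨i, hlo i⟩ with hlodef
    set hi : Fin (2 ^ n) → Fin (2 ^ (n + 1)) := fun i => ⟨2 ^ n + i, hhi i⟩ with hhidef
    set z : Finset (Fin N) := Finset.univ.biUnion (fun i => V (lo i)) with hz
    rcases h z with hl | hr
    · exact ih (A.filter fun a => a ⊆ z) (fun i => V (lo i))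
        (by
          intro a ha
          exact (Finset.mem_filter.mp ha).2)
        (by
          intro i
          rw [Finset.eq_empty_iff_forall_notMem]
          intro a ha
          rw [Finset.mem_filter, Finset.mem_filter] at ha
          have := hemp (lo i)
          rw [Finset.eq_empty_iff_forall_notMem] at this
          exact this a (Finset.mem_filter.mpr ⟨ha.1.1, ha.2⟩)) hl
    · refine ih (A.filter fun a => a ⊆ zᶜ) (fun i => V (hi i)) ?_ ?_ hr
      · intro a ha
        rw [Finset.mem_filter] at ha
        intro x hx
        have hxz : x ∉ z := by
          have := ha.2 hx
          simpa using this
        have := hcov a ha.1 hx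
        simp only [Finset.mem_biUnion, Finset.mem_univ, true_and] at this ⊢
        obtain ⟨j, hj⟩ := this
        by_cases hjc : (j : ℕ) < 2 ^ n
        · exfalso
          apply hxz
          rw [hz]
          simp only [Finset.mem_biUnion, Finset.mem_univ, true_and]
          refine ⟨⟨j, hjc⟩, ?_⟩
          have : lo ⟨j, hjc⟩ = j := Fin.ext rfl
          rwa [this]
        · push_neg at hjc
          have hjlt : (j : ℕ) - 2 ^ n < 2 ^ n := by
            have := j.2
            have : (2:ℕ)^(n+1) = 2 * 2^n := by ring
            omega
          refine ⟨⟨(j : ℕ) - 2 ^ n, hjlt⟩, ?_⟩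
          have : hi ⟨(j : ℕ) - 2 ^ n, hjlt⟩ = j := by
            rw [hhidef]
            exact Fin.ext (by simp only []; omega)
          rwa [this]
      · intro i
        rw [Finset.eq_empty_iff_forall_notMem]
        intro a ha
        rw [Finset.mem_filter, Finset.mem_filter] at ha
        have := hemp (hi i)
        rw [Finset.eq_empty_iff_forall_notMem] at this
        exact this a (Finset.mem_filter.mpr ⟨ha.1.1, ha.2⟩)

theorem stmt_13 {N : ℕ} (A : Finset (Finset (Fin N)))
    (hA : ∀ a ∈ A, 2 ≤ a.card) (n : ℕ) (h : splitBy A (2 ^ n)) :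
    ¬ norm3ge (n + 1) A := by
  obtain ⟨V, _, hcov, hemp⟩ := h
  exact aux13 n A V (fun a _ => by rw [hcov]; exact Finset.subset_univ a) hemp
end

section
/- With norm₃ as above, if A ⊆ P_N cannot be split by 2^n sets (no partition of N into 2^n pieces makes all restrictions empty), then norm₃(A) ≥ n+1. -/
lemma split_union {N m : ℕ} {A : Finset (Finset (Fin N))} {z : Finset (Fin N)}
    (h1 : splitBy (A.filter fun a => a ⊆ z) m)
    (h2 : splitBy (A.filter fun a => a ⊆ zᶜ) m) :
    splitBy A (m + m) := by
  obtain ⟨V, hVdisj, hVcov, hVempty⟩ := h1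
  obtain ⟨W, hWdisj, hWcov, hWempty⟩ := h2
  refine ⟨fun i => Fin.addCases (fun i => V i ∩ z) (fun j => W j ∩ zᶜ) i, ?_, ?_, ?_⟩
  · intro i j
    refine Fin.addCases (fun i' => ?_) (fun i' => ?_) i <;>
      refine Fin.addCases (fun j' => ?_) (fun j' => ?_) j <;>
        intro hij <;>
        simp only [Fin.addCases_left, Fin.addCases_right]
    · have : i' ≠ j' := fun he => hij (by rw [he])
      exact ((hVdisj i' j' this).mono inf_le_left inf_le_left)
    · exact Finset.disjoint_left.2 (by
        intro x hx hy
        have := Finset.mem_inter.1 hx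
        have := Finset.mem_inter.1 hy
        simp_all [Finset.mem_compl])
    · exact Finset.disjoint_left.2 (by
        intro x hx hy
        have := Finset.mem_inter.1 hx
        have := Finset.mem_inter.1 hy
        simp_all [Finset.mem_compl])
    · have : i' ≠ j' := fun he => hij (by rw [he])
      exact ((hWdisj i' j' this).mono inf_le_left inf_le_left)
  · ext x
    simp only [Finset.mem_biUnion, Finset.mem_univ, iff_true, true_and]
    by_cases hx : x ∈ z
    · have : x ∈ Finset.univ.biUnion V := by rw [hVcov]; exact Finset.mem_univ x
      obtain ⟨i, -, hi⟩ := Finset.mem_biUnion.1 this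
      exact ⟨Fin.castAdd m i, by simp [Fin.addCases_left, Finset.mem_inter, hi, hx]⟩
    · have : x ∈ Finset.univ.biUnion W := by rw [hWcov]; exact Finset.mem_univ x
      obtain ⟨i, -, hi⟩ := Finset.mem_biUnion.1 this
      refine ⟨Fin.natAdd m i, ?_⟩
      rw [Fin.addCases_right]
      simp [Finset.mem_inter, hi, Finset.mem_compl, hx]
  · intro i
    refine Fin.addCases (fun i' => ?_) (fun i' => ?_) i <;>
      simp only [Fin.addCases_left, Fin.addCases_right] <;>
      rw [Finset.filter_eq_empty_iff] <;> intro a ha hsub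
    · have h1 : a ⊆ z := hsub.trans Finset.inter_subset_right
      have := hVempty i'
      rw [Finset.filter_eq_empty_iff] at this
      exact this (Finset.mem_filter.2 ⟨ha, h1⟩) (hsub.trans Finset.inter_subset_left)
    · have h1 : a ⊆ zᶜ := hsub.trans Finset.inter_subset_right
      have := hWempty i'
      rw [Finset.filter_eq_empty_iff] at this
      exact this (Finset.mem_filter.2 ⟨ha, h1⟩) (hsub.trans Finset.inter_subset_left)

theorem stmt_14 {N : ℕ} (A : Finset (Finset (Fin N)))
    (hA : ∀ a ∈ A, 2 ≤ a.card) (n : ℕ) (h : ¬ splitBy A (2 ^ n)) :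
    norm3ge (n + 1) A := by
  induction n generalizing A with
  | zero =>
    intro hAe
    apply h
    refine ⟨fun _ => Finset.univ, ?_, ?_, ?_⟩
    · intro i j hij
      have h1 : (i : ℕ) < 1 := by simpa using i.isLt
      have h2 : (j : ℕ) < 1 := by simpa using j.isLt
      exact absurd (Fin.ext (by omega)) hij
    · simp
    · intro i; subst hAe; simp
  | succ n ih =>
    intro z
    by_contra h'
    push_neg at h'
    obtain ⟨h1, h2⟩ := h'
    have s1 : splitBy (A.filter fun a => a ⊆ z) (2 ^ n) := by
      by_contra hc
      exact h1 (ih _ (fun a ha => hA a (Finset.mem_filter.1 ha).1) hc)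
    have s2 : splitBy (A.filter fun a => a ⊆ zᶜ) (2 ^ n) := by
      by_contra hc
      exact h2 (ih _ (fun a ha => hA a (Finset.mem_filter.1 ha).1) hc)
    apply h
    have := split_union s1 s2
    rwa [show 2 ^ n + 2 ^ n = 2 ^ (n + 1) by rw [pow_succ, mul_two]] at this
end

section
/- For sets A, B ⊆ (N → 2): A ⊆ B if and only if Δ(B) ⪯ Δ(A), where for δ₁, δ₂ sets of partial functions, δ₁ ⪯ δ₂ means every σ ∈ δ₁ has some ρ ∈ δ₂ with ρ ⊆ σ. -/
/-- Partial functions from `Fin N` to `Bool` are modeled as `Fin N → Option Bool`. -/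
def PFunExtends {N : ℕ} (σ : Fin N → Option Bool) (f : Fin N → Bool) : Prop :=
  ∀ x b, σ x = some b → f x = b

/-- `ρ` is a subfunction of `σ` (its graph is included in that of `σ`). -/
def PFunLE {N : ℕ} (ρ σ : Fin N → Option Bool) : Prop :=
  ∀ x b, ρ x = some b → σ x = some b

/-- `Δ(A)`: the minimal partial functions `σ` with `[σ] ∩ A = ∅`. -/
def Delta {N : ℕ} (A : Set (Fin N → Bool)) : Set (Fin N → Option Bool) :=
  {σ | (∀ f ∈ A, ¬ PFunExtends σ f) ∧
    ∀ ρ, PFunLE ρ σ → ρ ≠ σ → ∃ f ∈ A, PFunExtends ρ f}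

/-- `δ₁ ⪯ δ₂`: every member of `δ₁` has a subfunction in `δ₂`. -/
def Prec {N : ℕ} (δ₁ δ₂ : Set (Fin N → Option Bool)) : Prop :=
  ∀ σ ∈ δ₁, ∃ ρ ∈ δ₂, PFunLE ρ σ

private lemma minimize {N : ℕ} (A : Set (Fin N → Bool)) :
    ∀ n (σ : Fin N → Option Bool),
      (Finset.univ.filter (fun x => (σ x).isSome)).card ≤ n →
      (∀ f ∈ A, ¬ PFunExtends σ f) →
      ∃ ρ, PFunLE ρ σ ∧ ρ ∈ Delta A := by
  intro n
  induction n with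
  | zero =>
    intro σ hc hσ
    refine ⟨σ, fun x b h => h, hσ, ?_⟩
    intro ρ hle hne
    exfalso; apply hne; funext x
    have hσx : σ x = none := by
      by_contra h
      have hmem : x ∈ Finset.univ.filter (fun x => (σ x).isSome) := by
        simp [Option.isSome_iff_ne_none, h]
      have := Finset.card_pos.mpr ⟨x, hmem⟩
      omega
    cases hρ : ρ x with
    | none => rw [hσx]
    | some b =>
      have := hle x b hρ
      rw [hσx] at this
      exact absurd this (by simp)
  | succ n ih =>
    intro σ hc hσ
    by_cases hmin : ∀ ρ, PFunLE ρ σ → ρ ≠ σ → ∃ f ∈ A, PFunExtends ρ f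
    · exact ⟨σ, fun x b h => h, hσ, hmin⟩
    · push_neg at hmin
      obtain ⟨ρ, hle, hne, hρA⟩ := hmin
      have hsub : (Finset.univ.filter (fun x => (ρ x).isSome)) ⊂
          (Finset.univ.filter (fun x => (σ x).isSome)) := by
        constructor
        · intro x hx
          simp only [Finset.mem_filter, Finset.mem_univ, true_and, Option.isSome_iff_exists] at hx ⊢
          obtain ⟨b, hb⟩ := hx
          exact ⟨b, hle x b hb⟩
        · intro hcon
          apply hne; funext x
          cases hρ : ρ x with
          | some b => exact (hle x b hρ).symm
          | none =>
            cases hσx : σ x with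
            | none => rfl
            | some b =>
              have : x ∈ Finset.univ.filter (fun x => (σ x).isSome) := by simp [hσx]
              have := hcon this
              simp [hρ] at this
      have hcard : (Finset.univ.filter (fun x => (ρ x).isSome)).card ≤ n := by
        have := Finset.card_lt_card hsub
        omega
      obtain ⟨ρ', h1, h2⟩ := ih ρ hcard (fun f hf he => hρA f hf he)
      exact ⟨ρ', fun x b h => hle x b (h1 x b h), h2⟩

private lemma minimize' {N : ℕ} (A : Set (Fin N → Bool)) (σ : Fin N → Option Bool)
    (hσ : ∀ f ∈ A, ¬ PFunExtends σ f) : ∃ ρ, PFunLE ρ σ ∧ ρ ∈ Delta A :=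
  minimize A _ σ le_rfl hσ

theorem stmt_19 {N : ℕ} (A B : Set (Fin N → Bool)) :
    A ⊆ B ↔ Prec (Delta B) (Delta A) := by
  constructor
  · intro hAB σ hσ
    obtain ⟨ρ, h1, h2⟩ := minimize' A σ (fun f hf => hσ.1 f (hAB hf))
    exact ⟨ρ, h2, h1⟩
  · intro h f hfA
    by_contra hfB
    set σ : Fin N → Option Bool := fun x => some (f x) with hσdef
    have hσ : ∀ g ∈ B, ¬ PFunExtends σ g := by
      intro g hg hext
      have : g = f := funext fun x => hext x (f x) rfl
      exact hfB (this ▸ hg)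
    obtain ⟨σ', hle', hσ'⟩ := minimize' B σ hσ
    obtain ⟨ρ, hρA, hρle⟩ := h σ' hσ'
    apply hρA.1 f hfA
    intro x b hb
    have := hle' x b (hρle x b hb)
    simp only [hσdef] at this
    exact Option.some.inj this
end
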